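/- Let K be a field, n ≥ 1, and ℓ ∈ ℤ. Then the following holds: for every r ≥ 1, every d ∈ ℕ, and every nonzero homogeneous polynomial f ∈ K[x_1,…,x_n] of degree d, the identity E_r·f = binom(d−ℓ, r)·f holds (binomial taken via its image in K) if and only if ℓ = 0. (This expresses that the degree-shifted graded module R(ℓ) is Eulerian if and only if ℓ = 0.) -/

import Mathlib

/-!
On a monomial `x^a` every summand of `E_r` is a scalar: `x^c ∂^{[c]} x^a = ∏ binom(a_i, c_i) x^a`,
so by the multivariate Vandermonde identity `E_r x^a = binom(|a|, r) x^a`. Hence `E_r` acts on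
forms of degree `d` as `binom(d, r)`, which is `binom(d - ℓ, r)` for all `r ≥ 1` and all `d` only
when `ℓ = 0`: for `ℓ < 0` compare at `d = 0, r = -ℓ`, for `ℓ > 0` at `d = r = ℓ`.
-/

/-- The divided-power partial derivative `∂_i^{[j]}` on `K[x_1,…,x_n]`, determined on
monomials by `∂_i^{[j]}(x^a) = binom(a_i, j) • x^{a - j·e_i}` (zero when `a_i < j`). -/
noncomputable def dpDeriv (K : Type*) [CommRing K] {n : ℕ} (i : Fin n) (j : ℕ) :
    MvPolynomial (Fin n) K →ₗ[K] MvPolynomial (Fin n) K :=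
  (Finsupp.lsum K fun a : Fin n →₀ ℕ =>
    (((a i).choose j : K)) •
      (MvPolynomial.monomial (a - Finsupp.single i j) : K →ₗ[K] MvPolynomial (Fin n) K)) ∘ₗ
    (AddMonoidAlgebra.coeffLinearEquiv K).toLinearMap

/-- The `r`-th Euler operator `E_r = Σ_{i_1+⋯+i_n=r} x_1^{i_1}⋯x_n^{i_n} ∂_1^{[i_1]}⋯∂_n^{[i_n]}`
on `K[x_1,…,x_n]`. -/
noncomputable def eulerOp (K : Type*) [CommRing K] (n : ℕ) (r : ℕ) :
    MvPolynomial (Fin n) K →ₗ[K] MvPolynomial (Fin n) K :=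
  ∑ c ∈ Finset.Nat.antidiagonalTuple n r,
    LinearMap.mulLeft K (MvPolynomial.monomial (Finsupp.equivFunOnFinite.symm c) (1 : K)) ∘ₗ
      ((List.finRange n).map fun i => dpDeriv K i (c i)).prod

open Finset MvPolynomial

theorem Finset.sum_piAntidiag_prod_choose {ι : Type*} [DecidableEq ι] (s : Finset ι)
    (a : ι → ℕ) (r : ℕ) :
    ∑ c ∈ s.piAntidiag r, ∏ i ∈ s, (a i).choose (c i) = (∑ i ∈ s, a i).choose r := by
  induction s using Finset.cons_induction generalizing r with
  | empty => rcases r with _ | r <;> simp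
  | cons i s hi ih =>
    rw [piAntidiag_cons hi, sum_disjiUnion, sum_cons, Nat.add_choose_eq]
    refine sum_congr rfl fun p _ => ?_
    rw [sum_map, ← ih p.2, mul_sum]
    refine sum_congr rfl fun g hg => ?_
    have hgi : g i = 0 := by_contra fun h => hi ((mem_piAntidiag.1 hg).2 i h)
    rw [prod_cons]
    congr 1
    · simp [hgi]
    · refine prod_congr rfl fun j hj => ?_
      simp [show j ≠ i from fun h => hi (h ▸ hj)]

section EulerOperator

variable (K : Type*) [CommRing K] {n : ℕ}

theorem dpDeriv_monomial (i : Fin n) (j : ℕ) (a : Fin n →₀ ℕ) (k : K) :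
    dpDeriv K i j (monomial a k) = ((a i).choose j : K) • monomial (a - Finsupp.single i j) k := by
  simp [dpDeriv, monomial, AddMonoidAlgebra.coeffLinearEquiv]

theorem list_prod_dpDeriv_monomial (c : Fin n → ℕ) {L : List (Fin n)} (hL : L.Nodup)
    (a : Fin n →₀ ℕ) (k : K) :
    (L.map fun i => dpDeriv K i (c i)).prod (monomial a k) =
      (((L.map fun i => (a i).choose (c i)).prod : ℕ) : K) •
        monomial (a - (L.map fun i => Finsupp.single i (c i)).sum) k := by
  induction L with
  | nil => simp
  | cons i L ih =>
    rw [List.nodup_cons] at hL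
    simp only [List.map_cons, List.prod_cons, List.sum_cons, Module.End.mul_apply,
      ih hL.2, map_smul, dpDeriv_monomial]
    have hLi : (L.map fun j => Finsupp.single j (c j)).sum i = 0 := by
      rw [← Finsupp.applyAddHom_apply, map_list_sum, List.map_map, List.sum_eq_zero]
      simp only [List.mem_map, Function.comp_apply, Finsupp.applyAddHom_apply]
      rintro _ ⟨j, hj, rfl⟩
      exact Finsupp.single_eq_of_ne (fun h => hL.1 (h ▸ hj))
    rw [Finsupp.tsub_apply, hLi, Nat.sub_zero, tsub_tsub, smul_smul, Nat.cast_mul, mul_comm,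
      add_comm (Finsupp.single i (c i))]

theorem eulerOp_monomial (r : ℕ) (a : Fin n →₀ ℕ) (k : K) :
    eulerOp K n r (monomial a k) = ((∑ i, a i).choose r : K) • monomial a k := by
  have summand : ∀ c : Fin n → ℕ,
      monomial (Finsupp.equivFunOnFinite.symm c) 1 *
        (List.finRange n |>.map fun i => dpDeriv K i (c i)).prod (monomial a k) =
      ((∏ i, (a i).choose (c i) : ℕ) : K) • monomial a k := by
    intro c
    rw [list_prod_dpDeriv_monomial K c (List.nodup_finRange n), mul_smul_comm, monomial_mul,
      one_mul, ← Fin.prod_univ_def, ← Fin.sum_univ_def, ← Finsupp.equivFunOnFinite_symm_eq_sum]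
    by_cases hca : ∀ i, c i ≤ a i
    · rw [add_tsub_cancel_of_le fun i => hca i]
    · obtain ⟨i, hi⟩ := not_forall.1 hca
      rw [prod_eq_zero (mem_univ i) (Nat.choose_eq_zero_of_lt (not_le.1 hi))]
      simp
  simp only [eulerOp, LinearMap.sum_apply, LinearMap.comp_apply, LinearMap.mulLeft_apply,
    summand, ← sum_smul, ← Nat.cast_sum]
  rw [← piAntidiag_univ_fin_eq_antidiagonalTuple, sum_piAntidiag_prod_choose]

theorem eulerOp_apply_of_isHomogeneous (r : ℕ) {d : ℕ} {f : MvPolynomial (Fin n) K}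
    (hf : f.IsHomogeneous d) : eulerOp K n r f = (d.choose r : K) • f := by
  conv_lhs => rw [← f.support_sum_monomial_coeff]
  conv_rhs => rw [← f.support_sum_monomial_coeff]
  rw [map_sum, smul_sum]
  refine sum_congr rfl fun a ha => ?_
  rw [eulerOp_monomial, ← hf (mem_support_iff.1 ha), Finsupp.weight_apply,
    Finsupp.sum_fintype] <;> simp

end EulerOperator

theorem eq_zero_of_forall_choose_eq_choose_sub {K : Type*} [Ring K] [Nontrivial K] {ℓ : ℤ}
    (h : ∀ r : ℕ, 1 ≤ r → ∀ d : ℕ, (d.choose r : K) = ((Ring.choose ((d : ℤ) - ℓ) r : ℤ) : K)) :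
    ℓ = 0 := by
  by_contra hℓ
  rcases lt_or_gt_of_ne hℓ with hneg | hpos
  · have hd := h (-ℓ).toNat (by omega) 0
    rw [show ((0 : ℕ) : ℤ) - ℓ = (-ℓ).toNat by omega, Ring.choose_natCast, Nat.choose_self,
      Nat.choose_eq_zero_of_lt (by omega)] at hd
    simp at hd
  · have hd := h ℓ.toNat (by omega) ℓ.toNat
    rw [show (ℓ.toNat : ℤ) - ℓ = (0 : ℕ) by omega, Ring.choose_natCast, Nat.choose_self,
      Nat.choose_eq_zero_of_lt (by omega)] at hd
    simp at hd

/-- Let `K` be a field, `n ≥ 1`, and `ℓ ∈ ℤ`.  Then every `r ≥ 1`, every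
`d : ℕ`, and every nonzero homogeneous polynomial `f` of degree `d` satisfy
`E_r · f = binom(d − ℓ, r) • f` (the generalized integer binomial coefficient taken via its
image in `K`) if and only if `ℓ = 0`; i.e. the degree-shifted graded module `R(ℓ)` is
Eulerian if and only if `ℓ = 0`. -/
theorem shifted_R_eulerian_iff (K : Type*) [Field K] (n : ℕ) (hn : 1 ≤ n) (ℓ : ℤ) :
    (∀ r : ℕ, 1 ≤ r → ∀ d : ℕ, ∀ f : MvPolynomial (Fin n) K, f ≠ 0 → f.IsHomogeneous d →
        eulerOp K n r f = ((Ring.choose ((d : ℤ) - ℓ) r : ℤ) : K) • f) ↔ ℓ = 0 := by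
  constructor
  · intro H
    refine eq_zero_of_forall_choose_eq_choose_sub (K := K) fun r hr d => ?_
    have hf : (X ⟨0, hn⟩ ^ d : MvPolynomial (Fin n) K) ≠ 0 := pow_ne_zero _ (X_ne_zero _)
    have hE := H r hr d _ hf (isHomogeneous_X_pow _ d)
    rw [eulerOp_apply_of_isHomogeneous K r (isHomogeneous_X_pow _ d)] at hE
    exact smul_left_injective K hf hE
  · rintro rfl r - d f - hf
    rw [eulerOp_apply_of_isHomogeneous K r hf, sub_zero, Ring.choose_natCast, Int.cast_natCast]
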